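/- Assume f, g, h and each p_i are twice continuously differentiable. Let x* ∈ X be S-stationary with multipliers λ* ∈ ℝᵐ, μ* ∈ ℝ^q (λ* ≥ 0, λ*_i g_i(x*) = 0 for all i, and ∂L/∂x_i(x*, λ*, μ*) = 0 for every i with x*_i ≠ 0), and set y* := y(x*). Define γ* ∈ ℝⁿ by γ*_i := −(1/s_i)·∂L/∂x_i(x*, λ*, μ*) if x*_i = 0 and γ*_i := −p_i′(0)/x*_i if x*_i ≠ 0. Then the following are equivalent: (a) (SP-SONC) dᵀ∇²ₓₓL(x*, λ*, μ*) d ≥ 0 for every d ∈ C(x*, λ*); (b) for every pair (dx, dy) ∈ ℝⁿ × ℝⁿ satisfying ∇h_j(x*)ᵀdx = 0 for all j, ∇g_i(x*)ᵀdx = 0 for all i ∈ I_g(x*) with λ*_i > 0, ∇g_i(x*)ᵀdx ≤ 0 for all i ∈ I_g(x*) with λ*_i = 0, dx_i ≥ 0 for all i ∈ I₀(x*), and y*_i·dx_i + x*_i·dy_i = 0 for all i, one has dxᵀ∇²ₓₓL(x*, λ*, μ*) dx + 2·Σ_{i=1}^n γ*_i·dx_i·dy_i + Σ_{i=1}^n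 p_i″(y*_i)·dy_i² ≥ 0. -/

import Mathlib

open Filter Topology

noncomputable section

/-- Euclidean n-space. -/
abbrev E (n : ℕ) : Type := EuclideanSpace ℝ (Fin n)

/-- The SP-Lagrangian L(x, λ, μ) = f(x) + λᵀg(x) + μᵀh(x). -/
def LSP {n m q : ℕ} (f : E n → ℝ) (g : Fin m → E n → ℝ) (h : Fin q → E n → ℝ)
    (lam : Fin m → ℝ) (mu : Fin q → ℝ) (x : E n) : ℝ :=
  f x + (∑ i, lam i * g i x) + (∑ j, mu j * h j x)

/-- The quadratic form d ↦ dᵀ∇²ₓₓL(x, λ, μ)d, where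
∇²ₓₓL = ∇²f + Σᵢ λᵢ∇²gᵢ + Σⱼ μⱼ∇²hⱼ. -/
def hessQ {n m q : ℕ} (f : E n → ℝ) (g : Fin m → E n → ℝ) (h : Fin q → E n → ℝ)
    (lam : Fin m → ℝ) (mu : Fin q → ℝ) (x d : E n) : ℝ :=
  iteratedFDeriv ℝ 2 f x ![d, d] +
    (∑ i, lam i * iteratedFDeriv ℝ 2 (g i) x ![d, d]) +
    (∑ j, mu j * iteratedFDeriv ℝ 2 (h j) x ![d, d])

/-- Membership in the SP-critical cone C(x*, λ). -/
def inCritCone {n m q : ℕ} (g : Fin m → E n → ℝ) (h : Fin q → E n → ℝ)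
    (lam : Fin m → ℝ) (xstar : E n) (d : E n) : Prop :=
  (∀ j, (∑ k, gradient (h j) xstar k * d k) = 0) ∧
  (∀ i, g i xstar = 0 → 0 < lam i → (∑ k, gradient (g i) xstar k * d k) = 0) ∧
  (∀ i, g i xstar = 0 → lam i = 0 → (∑ k, gradient (g i) xstar k * d k) ≤ 0) ∧
  (∀ i, xstar i = 0 → d i = 0)

/-!
The linearized complementarity condition `y*ᵢ dxᵢ + x*ᵢ dyᵢ = 0` decouples the coordinates:
where `x*ᵢ = 0` it forces `dxᵢ = 0` (as `y*ᵢ = sᵢ > 0`), and elsewhere it forces `dyᵢ = 0`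
(as `y*ᵢ = 0`). Hence every admissible `dx` lies in the SP-critical cone and all cross terms
`γ*ᵢ dxᵢ dyᵢ` vanish, while the curvature terms `pᵢ''(y*ᵢ) dyᵢ²` are nonnegative by convexity.
Conversely, a critical direction `d` gives the admissible pair `(d, 0)`.
-/

theorem ConvexOn.deriv_deriv_nonneg {φ : ℝ → ℝ} (hφ : ConvexOn ℝ Set.univ φ)
    (hd : Differentiable ℝ φ) (t : ℝ) : 0 ≤ deriv (deriv φ) t :=
  (monotoneOn_univ.mp (hφ.monotoneOn_deriv fun x _ => hd x)).deriv_nonneg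

lemma eq_zero_and_mul_eq_zero_of_linearized_compl {x y s a b : ℝ} (hs : s ≠ 0)
    (hy : (x = 0 → y = s) ∧ (x ≠ 0 → y = 0)) (hlink : y * a + x * b = 0) :
    (x = 0 → a = 0) ∧ a * b = 0 := by
  have ha : x = 0 → a = 0 := fun hx => by
    simpa [hy.1 hx, hx, hs] using hlink
  refine ⟨ha, ?_⟩
  by_cases hx : x = 0
  · rw [ha hx, zero_mul]
  · have hb : b = 0 := by simpa [hy.2 hx, hx] using hlink
    rw [hb, mul_zero]

lemma linearized_compl_of_right_eq_zero {x y a : ℝ}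
    (hy : x ≠ 0 → y = 0) (ha : x = 0 → a = 0) : y * a + x * 0 = 0 := by
  by_cases hx : x = 0
  · rw [ha hx]; ring
  · rw [hy hx]; ring

theorem stmt_8_general {n m q : ℕ}
    (f : E n → ℝ) (g : Fin m → E n → ℝ) (h : Fin q → E n → ℝ)
    (p : Fin n → ℝ → ℝ) (s : Fin n → ℝ)
    (hp : ∀ i, ContDiff ℝ 2 (p i))
    (hconv : ∀ i, ConvexOn ℝ Set.univ (p i))
    (hspos : ∀ i, 0 < s i)
    (xstar : E n)
    -- x* is S-stationary with multipliers λ*, μ* :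
    (lam : Fin m → ℝ) (mu : Fin q → ℝ)
    -- y* := y(x*) :
    (ystar : E n)
    (hy : ∀ i, (xstar i = 0 → ystar i = s i) ∧ (xstar i ≠ 0 → ystar i = 0))
    -- γ* as defined in the statement:
    (γstar : Fin n → ℝ) :
    -- (a) SP-SONC ...
    (∀ d : E n, inCritCone g h lam xstar d → 0 ≤ hessQ f g h lam mu xstar d) ↔
    -- ... iff (b)
    (∀ dx dy : E n,
      (∀ j, (∑ k, gradient (h j) xstar k * dx k) = 0) →
      (∀ i, g i xstar = 0 → 0 < lam i → (∑ k, gradient (g i) xstar k * dx k) = 0) →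
      (∀ i, g i xstar = 0 → lam i = 0 → (∑ k, gradient (g i) xstar k * dx k) ≤ 0) →
      (∀ i, xstar i = 0 → 0 ≤ dx i) →
      (∀ i, ystar i * dx i + xstar i * dy i = 0) →
      0 ≤ hessQ f g h lam mu xstar dx + 2 * (∑ i, γstar i * dx i * dy i) +
          ∑ i, deriv (deriv (p i)) (ystar i) * (dy i) ^ 2) := by
  constructor
  · intro ha dx dy hch hcg hcg' _ hlink
    have hsplit i :=
      eq_zero_and_mul_eq_zero_of_linearized_compl (hspos i).ne' (hy i) (hlink i)
    have hQ := ha dx ⟨hch, hcg, hcg', fun i => (hsplit i).1⟩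
    have hcross : ∑ i, γstar i * dx i * dy i = 0 :=
      Finset.sum_eq_zero fun i _ => by rw [mul_assoc, (hsplit i).2, mul_zero]
    have hcurv : 0 ≤ ∑ i, deriv (deriv (p i)) (ystar i) * (dy i) ^ 2 :=
      Finset.sum_nonneg fun i _ => mul_nonneg
        ((hconv i).deriv_deriv_nonneg ((hp i).differentiable two_ne_zero) _) (sq_nonneg _)
    linarith
  · rintro hb d ⟨hch, hcg, hcg', hd0⟩
    simpa using hb d 0 hch hcg hcg' (fun i hi => (hd0 i hi).ge)
      (fun i => linearized_compl_of_right_eq_zero (hy i).2 (hd0 i))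

/-- equivalence of SP-SONC with the second-order necessary condition
of the reformulated problem. -/
theorem stmt_8 {n m q : ℕ} (hn : 1 ≤ n) {ρ : ℝ} (hρ : 0 < ρ)
    (f : E n → ℝ) (g : Fin m → E n → ℝ) (h : Fin q → E n → ℝ)
    (hf : ContDiff ℝ 2 f) (hg : ∀ i, ContDiff ℝ 2 (g i)) (hh : ∀ j, ContDiff ℝ 2 (h j))
    (p : Fin n → ℝ → ℝ) (s : Fin n → ℝ)
    (hp : ∀ i, ContDiff ℝ 2 (p i))
    (hconv : ∀ i, ConvexOn ℝ Set.univ (p i))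
    (hspos : ∀ i, 0 < s i)
    (hmin : ∀ i t, p i (s i) ≤ p i t)
    (hstrict : ∀ i t, t ≠ s i → p i (s i) < p i t)
    (hscale : ∀ i, p i 0 - p i (s i) = ρ)
    (xstar : E n)
    -- x* ∈ X :
    (hgx : ∀ i, g i xstar ≤ 0) (hhx : ∀ j, h j xstar = 0) (hxnn : ∀ i, 0 ≤ xstar i)
    -- x* is S-stationary with multipliers λ*, μ* :
    (lam : Fin m → ℝ) (mu : Fin q → ℝ)
    (hlam : ∀ i, 0 ≤ lam i) (hcompl : ∀ i, lam i * g i xstar = 0)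
    (hstat : ∀ i, xstar i ≠ 0 → gradient (LSP f g h lam mu) xstar i = 0)
    -- y* := y(x*) :
    (ystar : E n)
    (hy : ∀ i, (xstar i = 0 → ystar i = s i) ∧ (xstar i ≠ 0 → ystar i = 0))
    -- γ* as defined in the statement:
    (γstar : Fin n → ℝ)
    (hγ : ∀ i, (xstar i = 0 →
        γstar i = -(gradient (LSP f g h lam mu) xstar i) / s i) ∧
      (xstar i ≠ 0 → γstar i = -(deriv (p i) 0) / xstar i)) :
    -- (a) SP-SONC ...
    (∀ d : E n, inCritCone g h lam xstar d → 0 ≤ hessQ f g h lam mu xstar d) ↔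
    -- ... iff (b)
    (∀ dx dy : E n,
      (∀ j, (∑ k, gradient (h j) xstar k * dx k) = 0) →
      (∀ i, g i xstar = 0 → 0 < lam i → (∑ k, gradient (g i) xstar k * dx k) = 0) →
      (∀ i, g i xstar = 0 → lam i = 0 → (∑ k, gradient (g i) xstar k * dx k) ≤ 0) →
      (∀ i, xstar i = 0 → 0 ≤ dx i) →
      (∀ i, ystar i * dx i + xstar i * dy i = 0) →
      0 ≤ hessQ f g h lam mu xstar dx + 2 * (∑ i, γstar i * dx i * dy i) +
          ∑ i, deriv (deriv (p i)) (ystar i) * (dy i) ^ 2) :=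
  stmt_8_general f g h p s hp hconv hspos xstar lam mu ystar hy γstar
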